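/- If the total mass is M = 1, q is a normalized central configuration with n ≥ 2 bodies, and |q_i| ≤ R for all i, then R ≥ 1/2. -/

import Mathlib

open Finset
open scoped RealInnerProductSpace

/-! Put `I = ∑ mᵢ ‖qᵢ‖²` and `rᵢⱼ = ‖qᵢ - qⱼ‖`. Pairing the equation for `qᵢ` with `mᵢ qᵢ` and
symmetrising in `i, j` gives `2 I = ∑ᵢⱼ mᵢ mⱼ / rᵢⱼ`; summing the equations against `mᵢ` gives
`∑ mᵢ qᵢ = 0` by antisymmetry, so Lagrange's identity and `∑ mᵢ = 1` give `2 I = ∑ᵢⱼ mᵢ mⱼ rᵢⱼ²`.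
Thus `∑ᵢⱼ mᵢ mⱼ (1 / rᵢⱼ - rᵢⱼ²) = 0`, which is impossible if all `rᵢⱼ < 1`; a pair with
`rᵢⱼ ≥ 1` gives `2 R ≥ ‖qᵢ‖ + ‖qⱼ‖ ≥ 1`. -/

section DoubleSum
variable {ι : Type*} [Fintype ι]

theorem Finset.sum_sum_add_swap {M : Type*} [AddCommMonoid M] (f : ι → ι → M) :
    ∑ i, ∑ j, (f i j + f j i) = 2 • ∑ i, ∑ j, f i j := by
  simp only [sum_add_distrib, two_nsmul, sum_comm (f := fun i j => f j i)]

theorem Finset.sum_sum_eq_zero_of_antisymm {E : Type*} [AddCommGroup E] [Module ℝ E]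
    {f : ι → ι → E} (hf : ∀ i j, f j i = -f i j) : ∑ i, ∑ j, f i j = 0 := by
  have h := sum_sum_add_swap f
  have h_cancel : ∀ i j, f i j + f j i = 0 := fun i j => by rw [hf, neg_add_cancel]
  simp only [h_cancel, sum_const_zero, two_nsmul, ← two_smul ℝ] at h
  exact (smul_eq_zero.mp h.symm).resolve_left two_ne_zero

end DoubleSum

theorem inner_sub_add_inner_sub_eq_norm_sq {E : Type*} [NormedAddCommGroup E]
    [InnerProductSpace ℝ E] (x y : E) : ⟪x, x - y⟫ + ⟪y, y - x⟫ = ‖x - y‖ ^ 2 := by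
  rw [← real_inner_self_eq_norm_sq]
  simp only [inner_sub_left, inner_sub_right, real_inner_comm x y]
  ring

/-- Also true at `r = 0` (both sides are `0`), so the diagonal terms `i = j` need no care. -/
theorem sq_div_pow_three_eq_inv (r : ℝ) : r ^ 2 / r ^ 3 = r⁻¹ := by
  rcases eq_or_ne r 0 with rfl | hr
  · simp
  · field_simp

section Config
variable {ι E : Type*} [Fintype ι] [NormedAddCommGroup E] [InnerProductSpace ℝ E]

theorem sum_sum_mul_norm_sub_sq (m : ι → ℝ) (q : ι → E) :
    ∑ i, ∑ j, m i * m j * ‖q i - q j‖ ^ 2 =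
      2 * (∑ i, m i) * ∑ i, m i * ‖q i‖ ^ 2 - 2 * ‖∑ i, m i • q i‖ ^ 2 := by
  have h_left : ∑ i, ∑ j, m i * m j * ‖q i‖ ^ 2 = (∑ i, m i) * ∑ i, m i * ‖q i‖ ^ 2 := by
    rw [mul_comm, sum_mul]
    exact sum_congr rfl fun i _ => by rw [mul_sum]; exact sum_congr rfl fun j _ => by ring
  have h_right : ∑ i, ∑ j, m i * m j * ‖q j‖ ^ 2 = (∑ i, m i) * ∑ i, m i * ‖q i‖ ^ 2 := by
    rw [sum_comm, ← h_left]
    exact sum_congr rfl fun i _ => sum_congr rfl fun j _ => by ring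
  have h_cross : ∑ i, ∑ j, m i * m j * (2 * ⟪q i, q j⟫) = 2 * ‖∑ i, m i • q i‖ ^ 2 := by
    rw [← real_inner_self_eq_norm_sq, sum_inner, mul_sum]
    simp only [real_inner_smul_left, inner_sum, real_inner_smul_right, mul_sum]
    exact sum_congr rfl fun i _ => sum_congr rfl fun j _ => by ring
  simp only [norm_sub_sq_real, mul_add, mul_sub, sum_add_distrib, sum_sub_distrib]
  rw [h_left, h_right, h_cross]
  ring

/-- The paper's sum runs over `j ≠ i`; including `j = i` changes nothing since `q i - q i = 0`. -/
def IsNormalizedCentralConfig (m : ι → ℝ) (q : ι → E) : Prop :=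
  ∀ i, q i = ∑ j, (m j / ‖q i - q j‖ ^ 3) • (q i - q j)

namespace IsNormalizedCentralConfig
variable {m : ι → ℝ} {q : ι → E}

theorem sum_smul_eq_zero (h : IsNormalizedCentralConfig m q) : ∑ i, m i • q i = 0 := by
  have h_expand : ∑ i, m i • q i = ∑ i, ∑ j, (m i * m j / ‖q i - q j‖ ^ 3) • (q i - q j) := by
    refine sum_congr rfl fun i _ => ?_
    conv_lhs => rw [h i]
    simp only [smul_sum, smul_smul, mul_div_assoc]
  rw [h_expand]
  refine sum_sum_eq_zero_of_antisymm fun i j => ?_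
  rw [norm_sub_rev, ← smul_neg, neg_sub, mul_comm (m j)]

theorem two_mul_sum_mul_norm_sq (h : IsNormalizedCentralConfig m q) :
    2 * ∑ i, m i * ‖q i‖ ^ 2 = ∑ i, ∑ j, m i * m j / ‖q i - q j‖ := by
  have h_expand : ∑ i, m i * ‖q i‖ ^ 2 =
      ∑ i, ∑ j, m i * m j / ‖q i - q j‖ ^ 3 * ⟪q i, q i - q j⟫ := by
    refine sum_congr rfl fun i _ => ?_
    calc m i * ‖q i‖ ^ 2 = m i * ⟪q i, q i⟫ := by rw [real_inner_self_eq_norm_sq]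
      _ = m i * ⟪q i, ∑ j, (m j / ‖q i - q j‖ ^ 3) • (q i - q j)⟫ := by rw [← h i]
      _ = _ := by
        simp only [inner_sum, real_inner_smul_right, mul_sum]
        exact sum_congr rfl fun j _ => by ring
  rw [h_expand, two_mul, ← two_nsmul, ← sum_sum_add_swap]
  refine sum_congr rfl fun i _ => sum_congr rfl fun j _ => ?_
  rw [norm_sub_rev (q j), mul_comm (m j) (m i), ← mul_add, inner_sub_add_inner_sub_eq_norm_sq,
    div_eq_mul_inv _ ‖q i - q j‖, ← sq_div_pow_three_eq_inv]
  ring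

theorem exists_one_le_norm_sub [Nontrivial ι] (h : IsNormalizedCentralConfig m q)
    (hm : ∀ i, 0 < m i) (hM : ∑ i, m i = 1) (hq : Pairwise fun i j => q i ≠ q j) :
    ∃ i j, i ≠ j ∧ 1 ≤ ‖q i - q j‖ := by
  by_contra! h_close
  have h_balance : ∑ i, ∑ j, m i * m j * (‖q i - q j‖⁻¹ - ‖q i - q j‖ ^ 2) = 0 := by
    have h_lagrange := sum_sum_mul_norm_sub_sq m q
    rw [h.sum_smul_eq_zero, hM, norm_zero] at h_lagrange
    simp only [mul_sub, sum_sub_distrib, ← div_eq_mul_inv, ← h.two_mul_sum_mul_norm_sq,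
      h_lagrange]
    ring
  have h_pos : ∀ i j, i ≠ j → 0 < m i * m j * (‖q i - q j‖⁻¹ - ‖q i - q j‖ ^ 2) := by
    intro i j hij
    have hr : 0 < ‖q i - q j‖ := norm_pos_iff.mpr (sub_ne_zero.mpr (hq hij))
    have hr1 := h_close i j hij
    refine mul_pos (mul_pos (hm i) (hm j)) (sub_pos.mpr ?_)
    exact (pow_lt_one₀ hr.le hr1 two_ne_zero).trans ((one_lt_inv₀ hr).mpr hr1)
  have h_nonneg : ∀ i j, 0 ≤ m i * m j * (‖q i - q j‖⁻¹ - ‖q i - q j‖ ^ 2) := by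
    intro i j
    rcases eq_or_ne i j with rfl | hij
    · simp
    · exact (h_pos i j hij).le
  obtain ⟨i, j, hij⟩ := exists_pair_ne ι
  refine (sum_pos' (fun i _ => sum_nonneg fun j _ => h_nonneg i j) ⟨i, mem_univ i,
    sum_pos' (fun j _ => h_nonneg i j) ⟨j, mem_univ j, h_pos i j hij⟩⟩).ne' h_balance

end IsNormalizedCentralConfig
end Config

theorem centralConfig_size_lower_bound
    (n d : ℕ) (hn : 2 ≤ n)
    (q : Fin n → EuclideanSpace ℝ (Fin d)) (m : Fin n → ℝ) (R : ℝ)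
    (hm : ∀ i, 0 < m i)
    (hM : ∑ i, m i = 1)
    (hq : ∀ i j, i ≠ j → q i ≠ q j)
    (hcc : ∀ i, q i = ∑ j ∈ Finset.univ \ {i},
      (m j / ‖q i - q j‖ ^ 3) • (q i - q j))
    (hR : ∀ i, ‖q i‖ ≤ R) :
    1 / 2 ≤ R := by
  have h_cc : IsNormalizedCentralConfig m q := fun i =>
    (hcc i).trans (sum_subset (subset_univ _) (by simp))
  have : Nontrivial (Fin n) := Fin.nontrivial_iff_two_le.mpr hn
  obtain ⟨i, j, -, h_far⟩ := h_cc.exists_one_le_norm_sub hm hM fun i j => hq i j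
  linarith [norm_sub_le (q i) (q j), hR i, hR j]
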